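/- The completion Ĉ'_m satisfies the irrelevance of rejected contracts condition: for every set of contracts X' and any contract x ∉ X', if x ∉ Ĉ'_m(X' ∪ {x}), then Ĉ'_m(X' ∪ {x}) = Ĉ'_m(X'). -/
import Mathlib


/-- A contract at a fixed member state: `(asylum seeker, wait time)`.
Asylum seekers are labelled by naturals; `π a` is the priority rank of `a`
(smaller rank = higher priority); wait times are naturals. -/
abbrev Ctr := ℕ × ℕ

open Classical in
/-- Pick, from a nonempty set of contracts, the lowest-wait-time contract of the
highest-priority asylum seeker (lexicographic minimum of (rank, wait, agent)). -/
noncomputable def pick (π : ℕ → ℕ) (Z : Finset Ctr) (h : Z.Nonempty) : Ctr :=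
  let k := (Z.image fun x => toLex ((π x.1 : ℕ), toLex (x.2, x.1))).min'
    (h.image _)
  ((ofLex (ofLex k).2).2, (ofLex (ofLex k).2).1)

open Classical in
/-- One run of the greedy algorithm with fuel.  `excl = true` excludes all
contracts of already accepted asylum seekers (the rule `Ĉ_m`), `excl = false`
excludes only already accepted contracts (the completion `Ĉ'_m`). -/
noncomputable def run (s : ℕ → ℕ) (q : ℕ) (r π : ℕ → ℕ) (excl : Bool)
    (X' : Finset Ctr) : ℕ → Finset Ctr → Finset Ctr
  | 0, acc => acc
  | n+1, acc =>
    let Z : Finset Ctr := X'.filter fun x =>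
      (acc.filter fun y => y.2 = x.2).card < r x.2 ∧
      (excl = true → ∀ y ∈ acc, y.1 ≠ x.1) ∧
      (excl = false → x ∉ acc)
    if q ≤ acc.sum (fun x => s x.1) then acc
    else if h : Z.Nonempty then
      run s q r π excl X' n (insert (pick π Z h) acc)
    else acc

/-- The member state choice rule `Ĉ_m`. -/
noncomputable def Chat (s : ℕ → ℕ) (q : ℕ) (r π : ℕ → ℕ)
    (X' : Finset Ctr) : Finset Ctr :=
  run s q r π true X' (X'.card + 1) ∅

/-- The completion `Ĉ'_m` of the member state choice rule. -/
noncomputable def Chat' (s : ℕ → ℕ) (q : ℕ) (r π : ℕ → ℕ)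
    (X' : Finset Ctr) : Finset Ctr :=
  run s q r π false X' (X'.card + 1) ∅

section Aux

/-- Reconstruct a contract from its sort key. -/
noncomputable def rec2 (k : Lex (ℕ × Lex (ℕ × ℕ))) : Ctr :=
  ((ofLex (ofLex k).2).2, (ofLex (ofLex k).2).1)

lemma pick_def (π : ℕ → ℕ) (Z : Finset Ctr) (h : Z.Nonempty) :
    pick π Z h = rec2 ((Z.image fun x => toLex ((π x.1 : ℕ), toLex (x.2, x.1))).min'
      (h.image _)) := rfl

lemma rec2_key (π : ℕ → ℕ) (z : Ctr) :
    rec2 (toLex ((π z.1 : ℕ), toLex (z.2, z.1))) = z := rfl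

lemma pick_mem (π : ℕ → ℕ) (Z : Finset Ctr) (h : Z.Nonempty) : pick π Z h ∈ Z := by
  have hm := (Z.image fun x => toLex ((π x.1 : ℕ), toLex (x.2, x.1))).min'_mem (h.image _)
  rw [Finset.mem_image] at hm
  obtain ⟨z, hz, hk⟩ := hm
  rw [pick_def, ← hk, rec2_key]
  exact hz

lemma pick_insert (π : ℕ → ℕ) (Z : Finset Ctr) (x : Ctr) (h : (insert x Z).Nonempty)
    (hne : pick π (insert x Z) h ≠ x) (hZ : Z.Nonempty) :
    pick π (insert x Z) h = pick π Z hZ := by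
  classical
  set f : Ctr → Lex (ℕ × Lex (ℕ × ℕ)) := fun y => toLex ((π y.1 : ℕ), toLex (y.2, y.1)) with hf
  have himg : (insert x Z).image f = insert (f x) (Z.image f) := Finset.image_insert f x Z
  set kb := ((insert x Z).image f).min' (h.image f) with hkb
  have hkb_mem : kb ∈ (insert x Z).image f := Finset.min'_mem _ _
  have h1 : kb ≠ f x := by
    intro he
    apply hne
    rw [pick_def, ← hkb, he, hf, rec2_key]
  have hkb_mem' : kb ∈ Z.image f := by
    rw [himg] at hkb_mem
    exact (Finset.mem_insert.1 hkb_mem).resolve_left h1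
  have h2 : kb = (Z.image f).min' (hZ.image f) := by
    refine le_antisymm ?_ (Finset.min'_le _ _ hkb_mem')
    refine Finset.min'_le _ _ ?_
    rw [himg]
    exact Finset.mem_insert_of_mem (Finset.min'_mem _ _)
  rw [pick_def, pick_def, ← hkb, h2]

lemma run_subset (s : ℕ → ℕ) (q : ℕ) (r π : ℕ → ℕ) (b : Bool) (X' : Finset Ctr) :
    ∀ n acc, acc ⊆ run s q r π b X' n acc := by
  intro n
  induction n with
  | zero => intro acc; exact subset_rfl
  | succ n ih =>
    intro acc
    rw [run]
    split_ifs with h1 h2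
    · exact subset_rfl
    · exact (Finset.subset_insert _ _).trans (ih _)
    · exact subset_rfl

lemma run_stable (s : ℕ → ℕ) (q : ℕ) (r π : ℕ → ℕ) (X' : Finset Ctr) :
    ∀ n acc, (X' \ acc).card ≤ n →
      run s q r π false X' (n + 1) acc = run s q r π false X' n acc := by
  intro n
  induction n with
  | zero =>
    intro acc hc
    have hsub : X' ⊆ acc := by
      rwa [Nat.le_zero, Finset.card_eq_zero, Finset.sdiff_eq_empty_iff_subset] at hc
    rw [run, run]
    split_ifs with h1 h2
    · rfl
    · exfalso
      obtain ⟨z, hz⟩ := h2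
      rw [Finset.mem_filter] at hz
      exact (hz.2.2.2 rfl) (hsub hz.1)
    · rfl
  | succ n ih =>
    intro acc hc
    conv_lhs => rw [run]
    conv_rhs => rw [run]
    split_ifs with h1 h2
    · rfl
    · apply ih
      have hp := pick_mem π _ h2
      rw [Finset.mem_filter] at hp
      have hpx : pick π _ h2 ∈ X' \ acc :=
        Finset.mem_sdiff.2 ⟨hp.1, hp.2.2.2 rfl⟩
      rw [Finset.sdiff_insert, Finset.card_erase_of_mem hpx]
      omega
    · rfl

lemma run_irc (s : ℕ → ℕ) (q : ℕ) (r π : ℕ → ℕ) (X' : Finset Ctr) (x : Ctr)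
    (hx : x ∉ X') :
    ∀ n acc, x ∉ acc → x ∉ run s q r π false (insert x X') n acc →
      run s q r π false (insert x X') n acc = run s q r π false X' n acc := by
  intro n
  induction n with
  | zero => intro acc _ _; rfl
  | succ n ih =>
    intro acc hxa hxr
    rw [run] at hxr ⊢
    conv_rhs => rw [run]
    by_cases hq : q ≤ acc.sum (fun y => s y.1)
    · simp only [if_pos hq]
    simp only [if_neg hq] at hxr ⊢
    simp only [Finset.filter_insert] at hxr ⊢
    by_cases hPx : (acc.filter fun y => y.2 = x.2).card < r x.2 ∧
        (false = true → ∀ y ∈ acc, y.1 ≠ x.1) ∧ (True → x ∉ acc)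
    · simp only [if_pos hPx] at hxr ⊢
      have hne : (insert x (X'.filter fun z =>
          (acc.filter fun y => y.2 = z.2).card < r z.2 ∧
          (false = true → ∀ y ∈ acc, y.1 ≠ z.1) ∧ (True → z ∉ acc))).Nonempty :=
        Finset.insert_nonempty _ _
      rw [dif_pos hne] at hxr ⊢
      have hpne : pick π _ hne ≠ x := by
        intro he
        exact hxr (run_subset s q r π false (insert x X') n _
          (Finset.mem_insert.2 (Or.inl he.symm)))
      have hpZ := pick_mem π _ hne
      have hZs : (X'.filter fun z =>
          (acc.filter fun y => y.2 = z.2).card < r z.2 ∧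
          (false = true → ∀ y ∈ acc, y.1 ≠ z.1) ∧ (True → z ∉ acc)).Nonempty :=
        ⟨_, (Finset.mem_insert.1 hpZ).resolve_left hpne⟩
      rw [dif_pos hZs]
      rw [pick_insert π _ x hne hpne hZs] at hxr ⊢
      refine ih _ ?_ hxr
      rw [Finset.mem_insert]
      push_neg
      refine ⟨?_, hxa⟩
      intro he
      have hm := pick_mem π _ hZs
      rw [← he, Finset.mem_filter] at hm
      exact hx hm.1
    · simp only [if_neg hPx] at hxr ⊢
      by_cases hZ : (X'.filter fun z =>
          (acc.filter fun y => y.2 = z.2).card < r z.2 ∧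
          (false = true → ∀ y ∈ acc, y.1 ≠ z.1) ∧ (True → z ∉ acc)).Nonempty
      · rw [dif_pos hZ] at hxr ⊢
        rw [dif_pos hZ]
        refine ih _ ?_ hxr
        rw [Finset.mem_insert]
        push_neg
        refine ⟨?_, hxa⟩
        intro he
        have hm := pick_mem π _ hZ
        rw [← he, Finset.mem_filter] at hm
        exact hx hm.1
      · rw [dif_neg hZ, dif_neg hZ]

end Aux

/-- Proposition 2(ii): the completion `Ĉ'_m` satisfies
irrelevance of rejected contracts. -/
theorem chat'_irc (s : ℕ → ℕ) (q : ℕ) (r π : ℕ → ℕ)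
    (hπ : Function.Injective π) (X' : Finset Ctr) (x : Ctr) (hx : x ∉ X')
    (hrej : x ∉ Chat' s q r π (insert x X')) :
    Chat' s q r π (insert x X') = Chat' s q r π X' := by
  unfold Chat' at hrej ⊢
  rw [Finset.card_insert_of_notMem hx] at hrej ⊢
  have hst : run s q r π false (insert x X') (X'.card + 1 + 1) ∅ =
      run s q r π false (insert x X') (X'.card + 1) ∅ := by
    apply run_stable
    rw [Finset.sdiff_empty, Finset.card_insert_of_notMem hx]
  rw [hst] at hrej ⊢
  exact run_irc s q r π X' x hx (X'.card + 1) ∅ (Finset.notMem_empty x) hrej
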